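/- Let (Z, 𝒜, μ) be a probability space, Q a positive integer, and G a nonempty countable family of measurable functions g : Z → [0, 1]. Define the Rademacher complexity ℜ_Q(G) = E_{z∼μ^{⊗Q}} E_ε [ sup_{g∈G} | (2/Q) Σ_{q=1}^Q ε_q g(z_q) | ], where ε is uniform on {−1,+1}^Q and independent of z. Then for every δ ∈ (0, 1), with probability at least 1 − δ over z = (z_1, …, z_Q) drawn i.i.d. from μ, every g ∈ G satisfies E_μ[g] ≤ (1/Q) Σ_{q=1}^Q g(z_q) + ℜ_Q(G) + √( 8 ln(2/δ) / Q ). -/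

import Mathlib

/-!
Write `D z = ⨆ g, (E g - P_z g)` for the uniform deviation of the sample `z`, where `P_z g` is the
empirical mean. Changing one sample point moves `D` by at most `1/Q`, so by McDiarmid's inequality
`D z ≥ E D + t` has probability at most `exp (-Q t² / 2)`; McDiarmid is obtained by induction on
the number of coordinates, peeling one coordinate off at a time and applying Hoeffding's lemma to
the conditional mean. For `t = √(8 log (2/δ) / Q)` this bound is `(δ/2)⁴ ≤ δ`.

The mean `E D` is bounded by symmetrization. Against a ghost sample `z'`,
`D z ≤ E_{z'} ⨆ g, (P_{z'} g - P_z g)`. For every sign pattern `ε`, exchanging `z q` and `z' q`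
wherever `ε q = false` preserves the law of `(z, z')` and turns `P_{z'} g - P_z g` into the
Rademacher sum `(1/Q) Σ ε_q (g (z' q) - g (z q))`. Hence `E D` is at most the expected Rademacher
supremum for each `ε`, and so at most its average `ℜ_Q(G)` over `ε`.
-/

open MeasureTheory

/-- The Rademacher sign associated with a Boolean coin flip. -/
def radSign (b : Bool) : ℝ := if b then 1 else -1

open ProbabilityTheory Real Function
open scoped NNReal

section Supremum
variable {ι : Type*} {a b : ι → ℝ} {B C : ℝ}

lemma bddAbove_range_of_abs_le (h : ∀ i, |a i| ≤ B) : BddAbove (Set.range a) :=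
  ⟨B, by rintro _ ⟨i, rfl⟩; exact (le_abs_self _).trans (h i)⟩

lemma abs_ciSup_le [Nonempty ι] (h : ∀ i, |a i| ≤ B) : |⨆ i, a i| ≤ B := by
  obtain ⟨i⟩ := ‹Nonempty ι›
  refine abs_le.2 ⟨?_, ciSup_le fun i => (le_abs_self _).trans (h i)⟩
  exact (neg_le_of_abs_le (h i)).trans (le_ciSup (bddAbove_range_of_abs_le h) i)

lemma abs_ciSup_sub_ciSup_le [Nonempty ι] (ha : BddAbove (Set.range a))
    (hb : BddAbove (Set.range b)) (h : ∀ i, |a i - b i| ≤ C) :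
    |(⨆ i, a i) - ⨆ i, b i| ≤ C := by
  refine abs_sub_le_iff.2 ⟨?_, ?_⟩ <;> rw [sub_le_iff_le_add] <;> refine ciSup_le fun i => ?_
  · linarith [le_ciSup hb i, (abs_le.1 (h i)).2]
  · linarith [le_ciSup ha i, (abs_le.1 (h i)).1]

end Supremum

lemma Measurable.integrable_of_abs_le {α : Type*} [MeasurableSpace α] {μ : Measure α}
    [IsFiniteMeasure μ] {f : α → ℝ} (hf : Measurable f) {C : ℝ} (h : ∀ x, |f x| ≤ C) :
    Integrable f μ :=
  .of_bound hf.aestronglyMeasurable C (.of_forall h)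

lemma MeasureTheory.MeasurePreserving.integral_comp_of_measurable {α β : Type*}
    [MeasurableSpace α] [MeasurableSpace β] {μ : Measure α} {ν : Measure β} {f : α → β}
    (hf : MeasurePreserving f μ ν) {g : β → ℝ} (hg : Measurable g) :
    ∫ x, g (f x) ∂μ = ∫ y, g y ∂ν := by
  rw [← hf.map_eq, integral_map hf.measurable.aemeasurable hg.aestronglyMeasurable]

lemma MeasureTheory.Measure.ofReal_one_sub_le_measure_compl {α : Type*} [MeasurableSpace α]
    {μ : Measure α} [IsProbabilityMeasure μ] {s : Set α} (hs : MeasurableSet s) {δ : ℝ}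
    (h : μ.real s ≤ δ) : ENNReal.ofReal (1 - δ) ≤ μ sᶜ := by
  rw [← ofReal_measureReal, measureReal_compl hs, probReal_univ]
  exact ENNReal.ofReal_le_ofReal (by linarith)

section SubgaussianProduct
variable {α β : Type*} [MeasurableSpace α] [MeasurableSpace β] {μ : Measure α} {ν : Measure β}
  [SFinite μ] [SFinite ν]

lemma ProbabilityTheory.HasSubgaussianMGF.prod_of_sections {F : α × β → ℝ} (hF : Measurable F)
    {h : α → ℝ} {m : ℝ} {c₁ c₂ : ℝ≥0} (hh : HasSubgaussianMGF (fun x => h x - m) c₁ μ)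
    (hsec : ∀ x, HasSubgaussianMGF (fun y => F (x, y) - h x) c₂ ν) :
    HasSubgaussianMGF (fun p => F p - m) (c₁ + c₂) (μ.prod ν) := by
  have hsplit : ∀ t x y,
      exp (t * (F (x, y) - m)) = exp (t * (h x - m)) * exp (t * (F (x, y) - h x)) :=
    fun t x y => by rw [← exp_add]; ring_nf
  have hsection : ∀ t x, ∫ y, exp (t * (F (x, y) - m)) ∂ν
      = exp (t * (h x - m)) * mgf (fun y => F (x, y) - h x) ν t := fun t x => by
    simp_rw [hsplit t x, mgf, integral_const_mul]
  have hbound : ∀ t x, exp (t * (h x - m)) * mgf (fun y => F (x, y) - h x) ν t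
      ≤ exp (t * (h x - m)) * exp (c₂ * t ^ 2 / 2) := fun t x =>
    mul_le_mul_of_nonneg_left ((hsec x).mgf_le t) (exp_nonneg _)
  have hint : ∀ t, Integrable (fun p => exp (t * (F p - m))) (μ.prod ν) := fun t => by
    have hmeas : Measurable fun p => exp (t * (F p - m)) := by fun_prop
    refine (integrable_prod_iff hmeas.aestronglyMeasurable).2 ⟨.of_forall fun x => ?_, ?_⟩
    · simp_rw [hsplit t x]
      exact ((hsec x).integrable_exp_mul t).const_mul _
    · refine ((hh.integrable_exp_mul t).mul_const (exp (c₂ * t ^ 2 / 2))).mono'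
        (hmeas.norm.stronglyMeasurable.integral_prod_right').aestronglyMeasurable
        (.of_forall fun x => ?_)
      simp_rw [norm_eq_abs, abs_of_pos (exp_pos _), hsection t x]
      rw [abs_of_nonneg (mul_nonneg (exp_nonneg _) mgf_nonneg)]
      exact hbound t x
  refine ⟨hint, fun t => ?_⟩
  calc mgf (fun p => F p - m) (μ.prod ν) t
      = ∫ x, exp (t * (h x - m)) * mgf (fun y => F (x, y) - h x) ν t ∂μ := by
        rw [mgf, integral_prod _ (hint t)]
        simp_rw [hsection t]
    _ ≤ ∫ x, exp (t * (h x - m)) * exp (c₂ * t ^ 2 / 2) ∂μ :=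
        integral_mono_of_nonneg (.of_forall fun x => mul_nonneg (exp_nonneg _) mgf_nonneg)
          ((hh.integrable_exp_mul t).mul_const _) (.of_forall (hbound t))
    _ = mgf (fun x => h x - m) μ t * exp (c₂ * t ^ 2 / 2) := by rw [integral_mul_const, mgf]
    _ ≤ exp (c₁ * t ^ 2 / 2) * exp (c₂ * t ^ 2 / 2) :=
        mul_le_mul_of_nonneg_right (hh.mgf_le t) (exp_nonneg _)
    _ = exp (↑(c₁ + c₂) * t ^ 2 / 2) := by rw [← exp_add]; push_cast; ring_nf

end SubgaussianProduct

section SubgaussianOneVariable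
variable {α : Type*} [MeasurableSpace α] {μ : Measure α}

lemma ProbabilityTheory.HasSubgaussianMGF.integrable_of_sub_const [IsFiniteMeasure μ]
    {f : α → ℝ} {m : ℝ} {c : ℝ≥0} (h : HasSubgaussianMGF (fun x => f x - m) c μ) :
    Integrable f μ := by
  simpa only [Pi.add_def, sub_add_cancel] using h.integrable.add (integrable_const m)

lemma ProbabilityTheory.hasSubgaussianMGF_sub_integral_of_abs_sub_le [IsProbabilityMeasure μ]
    {h : α → ℝ} (hm : AEMeasurable h μ) {c : ℝ≥0} (hc : ∀ x x', |h x - h x'| ≤ c) :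
    HasSubgaussianMGF (fun x => h x - ∫ x, h x ∂μ) (c ^ 2) μ := by
  obtain ⟨x₀⟩ := nonempty_of_isProbabilityMeasure μ
  have hmem : ∀ x, h x ∈ Set.Icc (h x₀ - c) (h x₀ + c) := fun x =>
    ⟨by linarith [abs_le.1 (hc x x₀)], by linarith [abs_le.1 (hc x x₀)]⟩
  convert hasSubgaussianMGF_of_mem_Icc hm (.of_forall hmem) using 2
  ext
  simp [abs_of_nonneg]

end SubgaussianOneVariable

section McDiarmid
variable {Z : Type*} [MeasurableSpace Z] (μ : Measure Z) [IsProbabilityMeasure μ]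

/-- McDiarmid's inequality. The variance proxy `n c²` is a factor 4 above the sharp one: Hoeffding's
lemma is applied to each coordinate on an interval of length `2 c`. -/
theorem hasSubgaussianMGF_sub_integral_of_bounded_differences {n : ℕ} {f : (Fin n → Z) → ℝ}
    (hf : Measurable f) {c : ℝ≥0} (hd : ∀ z q x, |f (update z q x) - f z| ≤ c) :
    HasSubgaussianMGF (fun z => f z - ∫ z', f z' ∂Measure.pi fun _ => μ) (n * c ^ 2)
      (Measure.pi fun _ => μ) := by
  induction n with
  | zero =>
    have hconst : ∀ z : Fin 0 → Z, f z - ∫ z', f z' ∂Measure.pi (fun _ => μ) = 0 := fun z => by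
      rw [integral_unique, Subsingleton.elim z default]; simp
    simp [hconst]
  | succ n ih =>
    set ν := Measure.pi fun _ : Fin n => μ
    set e := MeasurableEquiv.piFinSuccAbove (fun _ : Fin (n + 1) => Z) 0
    have he : MeasurePreserving e (Measure.pi fun _ => μ) (μ.prod ν) :=
      measurePreserving_piFinSuccAbove (fun _ => μ) 0
    have he_symm : ∀ p, e.symm p = Fin.cons p.1 p.2 := fun p => by
      simp [e, MeasurableEquiv.piFinSuccAbove_symm_apply]; rfl
    set F : Z × (Fin n → Z) → ℝ := fun p => f (e.symm p)
    have hF : Measurable F := hf.comp e.symm.measurable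
    set h : Z → ℝ := fun x => ∫ w, F (x, w) ∂ν
    have hsection : ∀ x, HasSubgaussianMGF (fun w => F (x, w) - h x) (n * c ^ 2) ν := fun x =>
      ih (hF.comp measurable_prodMk_left) fun w q y => by
        simpa [F, he_symm, Fin.cons_update] using hd (Fin.cons x w) q.succ y
    have hh : HasSubgaussianMGF (fun x => h x - ∫ x, h x ∂μ) (c ^ 2) μ := by
      refine hasSubgaussianMGF_sub_integral_of_abs_sub_le
        (hF.stronglyMeasurable.integral_prod_right' (ν := ν)).measurable.aemeasurable
        fun x x' => ?_
      rw [← integral_sub (hsection x).integrable_of_sub_const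
        (hsection x').integrable_of_sub_const]
      simpa using norm_integral_le_of_norm_le_const (μ := ν) (C := c)
        (f := fun w => F (x, w) - F (x', w)) (.of_forall fun w => by
          simpa [F, he_symm, Fin.update_cons_zero] using hd (Fin.cons x' w) 0 x)
    have hprod := hh.prod_of_sections hF hsection
    have hmean : ∫ z, f z ∂Measure.pi (fun _ => μ) = ∫ x, h x ∂μ := by
      rw [← integral_prod F hprod.integrable_of_sub_const]
      simpa [F] using he.integral_comp' (f := e) F
    rw [hmean]
    rw [← he.map_eq] at hprod
    convert hprod.of_map he.measurable.aemeasurable using 1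
    · ext z; simp [F]
    · push_cast; ring

theorem measureReal_integral_add_le_le_of_bounded_differences {n : ℕ} {f : (Fin n → Z) → ℝ}
    (hf : Measurable f) {c : ℝ≥0} (hd : ∀ z q x, |f (update z q x) - f z| ≤ c) {ε : ℝ}
    (hε : 0 ≤ ε) :
    (Measure.pi fun _ => μ).real {z | ∫ z', f z' ∂(Measure.pi fun _ => μ) + ε ≤ f z}
      ≤ exp (-ε ^ 2 / (2 * n * c ^ 2)) := by
  have h := (hasSubgaussianMGF_sub_integral_of_bounded_differences μ hf hd).measure_ge_le hε
  simp_rw [le_sub_iff_add_le'] at h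
  convert h using 3
  push_cast
  ring

end McDiarmid

section SwapCoordinates
variable {ι α : Type*}

def swapWhere (s : ι → Bool) (p : (ι → α) × (ι → α)) : (ι → α) × (ι → α) :=
  (fun i => if s i then p.1 i else p.2 i, fun i => if s i then p.2 i else p.1 i)

lemma measurePreserving_swapWhere [Fintype ι] [MeasurableSpace α] (μ : Measure α)
    [SigmaFinite μ] (s : ι → Bool) :
    MeasurePreserving (swapWhere s) ((Measure.pi fun _ => μ).prod (Measure.pi fun _ => μ))
      ((Measure.pi fun _ => μ).prod (Measure.pi fun _ => μ)) := by
  set J := MeasurableEquiv.arrowProdEquivProdArrow α α ι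
  have hJ : MeasurePreserving J (Measure.pi fun _ => μ.prod μ)
      ((Measure.pi fun _ => μ).prod (Measure.pi fun _ => μ)) :=
    measurePreserving_arrowProdEquivProdArrow α α ι (fun _ => μ) (fun _ => μ)
  have hT : MeasurePreserving (fun (w : ι → α × α) i => if s i then w i else (w i).swap)
      (Measure.pi fun _ => μ.prod μ) (Measure.pi fun _ => μ.prod μ) :=
    measurePreserving_pi _ _ (f := fun i (p : α × α) => if s i then p else p.swap) fun i => by
      cases s i
      · exact Measure.measurePreserving_swap
      · exact .id _
  convert hJ.comp (hT.comp hJ.symm) using 1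
  ext p i <;> by_cases h : s i <;>
    simp [swapWhere, J, MeasurableEquiv.arrowProdEquivProdArrow, h]

end SwapCoordinates

section Empirical
variable {Z : Type*} {n : ℕ}

noncomputable def empiricalMean (φ : Z → ℝ) (z : Fin n → Z) : ℝ :=
  (1 / (n : ℝ)) * ∑ q, φ (z q)

lemma measurable_empiricalMean [MeasurableSpace Z] {φ : Z → ℝ} (hφ : Measurable φ) :
    Measurable (empiricalMean (n := n) φ) := by
  unfold empiricalMean; fun_prop

lemma div_natCast_mul_sum_le {C : ℝ} (hC : 0 ≤ C) {a : Fin n → ℝ} (ha : ∀ q, a q ≤ 1) :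
    C / n * ∑ q, a q ≤ C := by
  rcases Nat.eq_zero_or_pos n with rfl | hn
  · simpa using hC
  calc C / n * ∑ q, a q ≤ C / n * n := by
        gcongr; simpa using Finset.sum_le_sum fun q (_ : q ∈ Finset.univ) => ha q
    _ = C := by field_simp

lemma empiricalMean_mem_Icc {φ : Z → ℝ} (hφ : ∀ x, φ x ∈ Set.Icc (0 : ℝ) 1) (z : Fin n → Z) :
    empiricalMean φ z ∈ Set.Icc (0 : ℝ) 1 :=
  ⟨mul_nonneg (by positivity) (Finset.sum_nonneg fun q _ => (hφ (z q)).1),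
    div_natCast_mul_sum_le zero_le_one fun q => (hφ (z q)).2⟩

lemma empiricalMean_update_sub (φ : Z → ℝ) (z : Fin n → Z) (q : Fin n) (x : Z) :
    empiricalMean φ (update z q x) - empiricalMean φ z = (φ x - φ (z q)) / n := by
  rw [empiricalMean, empiricalMean, ← mul_sub, ← Finset.sum_sub_distrib,
    Finset.sum_eq_single q (fun j _ hj => by simp [update_of_ne hj]) (by simp)]
  simp [div_eq_inv_mul]

lemma integral_empiricalMean [MeasurableSpace Z] (μ : Measure Z) [IsProbabilityMeasure μ]
    (hn : 0 < n) {φ : Z → ℝ} (hφ : Measurable φ) (hφμ : Integrable φ μ) :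
    ∫ z, empiricalMean φ z ∂(Measure.pi fun _ : Fin n => μ) = ∫ x, φ x ∂μ := by
  have heval : ∀ q : Fin n, ∫ z, φ (z q) ∂(Measure.pi fun _ => μ) = ∫ x, φ x ∂μ := fun q =>
    (measurePreserving_eval _ q).integral_comp_of_measurable hφ
  simp_rw [empiricalMean, integral_const_mul]
  rw [integral_finsetSum (f := fun (q : Fin n) (z : Fin n → Z) => φ (z q)) _ fun q _ =>
    (measurePreserving_eval _ q).integrable_comp_of_integrable hφμ]
  simp [heval]
  field_simp

lemma abs_radSign (b : Bool) : |radSign b| = 1 := by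
  cases b <;> simp [radSign]

lemma abs_rademacherSum_le {φ : Z → ℝ} (hφ : ∀ x, φ x ∈ Set.Icc (0 : ℝ) 1) (ε : Fin n → Bool)
    (z : Fin n → Z) : |(2 / (n : ℝ)) * ∑ q, radSign (ε q) * φ (z q)| ≤ 2 := by
  rw [abs_mul, abs_of_nonneg (by positivity)]
  refine (mul_le_mul_of_nonneg_left (Finset.abs_sum_le_sum_abs _ _) (by positivity)).trans ?_
  refine div_natCast_mul_sum_le zero_le_two fun q => ?_
  rw [abs_mul, abs_radSign, one_mul, abs_of_nonneg (hφ (z q)).1]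
  exact (hφ (z q)).2

end Empirical

section UniformDeviation
variable {Z ι : Type*} [MeasurableSpace Z] {n : ℕ}

noncomputable def supDeviation (μ : Measure Z) (g : ι → Z → ℝ) (z : Fin n → Z) : ℝ :=
  ⨆ i, (∫ x, g i x ∂μ - empiricalMean (g i) z)

noncomputable def supGap (g : ι → Z → ℝ) (z z' : Fin n → Z) : ℝ :=
  ⨆ i, (empiricalMean (g i) z' - empiricalMean (g i) z)

noncomputable def rademacherSup (g : ι → Z → ℝ) (ε : Fin n → Bool) (z : Fin n → Z) : ℝ :=
  ⨆ i, |(2 / (n : ℝ)) * ∑ q, radSign (ε q) * g i (z q)|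

noncomputable def rademacherComplexity (μ : Measure Z) (g : ι → Z → ℝ) (n : ℕ) : ℝ :=
  ∫ z, (∑ ε : Fin n → Bool, rademacherSup g ε z) / 2 ^ n ∂(Measure.pi fun _ => μ)

variable {μ : Measure Z} {g : ι → Z → ℝ}

lemma measurable_supDeviation [Countable ι] (hgm : ∀ i, Measurable (g i)) :
    Measurable (supDeviation (n := n) μ g) :=
  .iSup fun i => measurable_const.sub (measurable_empiricalMean (hgm i))

variable [IsProbabilityMeasure μ]

lemma integral_mem_Icc_of_mem_Icc {φ : Z → ℝ} (hφ : ∀ x, φ x ∈ Set.Icc (0 : ℝ) 1) :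
    ∫ x, φ x ∂μ ∈ Set.Icc (0 : ℝ) 1 :=
  ⟨integral_nonneg fun x => (hφ x).1, by
    simpa using integral_mono_of_nonneg (.of_forall fun x => (hφ x).1)
      (integrable_const (μ := μ) (1 : ℝ)) (.of_forall fun x => (hφ x).2)⟩

lemma abs_integral_sub_empiricalMean_le (hg : ∀ i x, g i x ∈ Set.Icc (0 : ℝ) 1) (i : ι)
    (z : Fin n → Z) : |∫ x, g i x ∂μ - empiricalMean (g i) z| ≤ 1 :=
  abs_sub_le_of_nonneg_of_le (integral_mem_Icc_of_mem_Icc (hg i)).1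
    (integral_mem_Icc_of_mem_Icc (hg i)).2 (empiricalMean_mem_Icc (hg i) z).1
    (empiricalMean_mem_Icc (hg i) z).2

lemma le_supDeviation (hg : ∀ i x, g i x ∈ Set.Icc (0 : ℝ) 1) (i : ι) (z : Fin n → Z) :
    ∫ x, g i x ∂μ - empiricalMean (g i) z ≤ supDeviation μ g z :=
  le_ciSup (bddAbove_range_of_abs_le (abs_integral_sub_empiricalMean_le hg · z)) i

lemma abs_supDeviation_le [Nonempty ι] (hg : ∀ i x, g i x ∈ Set.Icc (0 : ℝ) 1) (z : Fin n → Z) :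
    |supDeviation μ g z| ≤ 1 :=
  abs_ciSup_le (abs_integral_sub_empiricalMean_le hg · z)

lemma abs_supDeviation_update_sub_le [Nonempty ι] (hg : ∀ i x, g i x ∈ Set.Icc (0 : ℝ) 1)
    (z : Fin n → Z) (q : Fin n) (x : Z) :
    |supDeviation μ g (update z q x) - supDeviation μ g z| ≤ 1 / n := by
  refine abs_ciSup_sub_ciSup_le
    (bddAbove_range_of_abs_le (abs_integral_sub_empiricalMean_le hg · _))
    (bddAbove_range_of_abs_le (abs_integral_sub_empiricalMean_le hg · _)) fun i => ?_
  rw [sub_sub_sub_cancel_left, abs_sub_comm, empiricalMean_update_sub, abs_div, Nat.abs_cast]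
  gcongr
  exact abs_sub_le_of_nonneg_of_le (hg i x).1 (hg i x).2 (hg i (z q)).1 (hg i (z q)).2

end UniformDeviation

section Symmetrization
variable {Z ι : Type*} {n : ℕ} {g : ι → Z → ℝ}

lemma abs_empiricalMean_sub_le (hg : ∀ i x, g i x ∈ Set.Icc (0 : ℝ) 1) (i : ι)
    (z z' : Fin n → Z) : |empiricalMean (g i) z' - empiricalMean (g i) z| ≤ 1 :=
  abs_sub_le_of_nonneg_of_le (empiricalMean_mem_Icc (hg i) z').1
    (empiricalMean_mem_Icc (hg i) z').2 (empiricalMean_mem_Icc (hg i) z).1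
    (empiricalMean_mem_Icc (hg i) z).2

lemma abs_supGap_le [Nonempty ι] (hg : ∀ i x, g i x ∈ Set.Icc (0 : ℝ) 1) (z z' : Fin n → Z) :
    |supGap g z z'| ≤ 1 :=
  abs_ciSup_le (abs_empiricalMean_sub_le hg · z z')

lemma le_supGap (hg : ∀ i x, g i x ∈ Set.Icc (0 : ℝ) 1) (i : ι) (z z' : Fin n → Z) :
    empiricalMean (g i) z' - empiricalMean (g i) z ≤ supGap g z z' :=
  le_ciSup (bddAbove_range_of_abs_le (abs_empiricalMean_sub_le hg · z z')) i

lemma measurable_supGap [MeasurableSpace Z] [Countable ι] (hgm : ∀ i, Measurable (g i)) :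
    Measurable fun p : (Fin n → Z) × (Fin n → Z) => supGap g p.1 p.2 :=
  .iSup fun i => ((measurable_empiricalMean (hgm i)).comp measurable_snd).sub
    ((measurable_empiricalMean (hgm i)).comp measurable_fst)

lemma abs_rademacherSup_le [Nonempty ι] (hg : ∀ i x, g i x ∈ Set.Icc (0 : ℝ) 1)
    (ε : Fin n → Bool) (z : Fin n → Z) : |rademacherSup g ε z| ≤ 2 :=
  abs_ciSup_le fun i => (abs_abs _).trans_le (abs_rademacherSum_le (hg i) ε z)

lemma le_rademacherSup (hg : ∀ i x, g i x ∈ Set.Icc (0 : ℝ) 1) (ε : Fin n → Bool)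
    (z : Fin n → Z) (i : ι) :
    |(2 / (n : ℝ)) * ∑ q, radSign (ε q) * g i (z q)| ≤ rademacherSup g ε z :=
  le_ciSup (bddAbove_range_of_abs_le fun i => (abs_abs _).trans_le
    (abs_rademacherSum_le (hg i) ε z)) i

lemma measurable_rademacherSup [MeasurableSpace Z] [Countable ι] (hgm : ∀ i, Measurable (g i))
    (ε : Fin n → Bool) :
    Measurable (rademacherSup g ε) :=
  .iSup fun i => by have := hgm i; fun_prop

lemma supGap_swapWhere_le [Nonempty ι] (hg : ∀ i x, g i x ∈ Set.Icc (0 : ℝ) 1)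
    (ε : Fin n → Bool) (p : (Fin n → Z) × (Fin n → Z)) :
    supGap g (swapWhere ε p).1 (swapWhere ε p).2
      ≤ (rademacherSup g ε p.2 + rademacherSup g ε p.1) / 2 := by
  refine ciSup_le fun i => ?_
  have hterm : ∀ q, g i ((swapWhere ε p).2 q) - g i ((swapWhere ε p).1 q)
      = radSign (ε q) * g i (p.2 q) - radSign (ε q) * g i (p.1 q) := fun q => by
    by_cases h : ε q
    · simp [swapWhere, radSign, h]
    · simp [swapWhere, radSign, h]; ring
  have hgap : empiricalMean (g i) (swapWhere ε p).2 - empiricalMean (g i) (swapWhere ε p).1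
      = (2 / (n : ℝ)) * (∑ q, radSign (ε q) * g i (p.2 q)) / 2
        - (2 / (n : ℝ)) * (∑ q, radSign (ε q) * g i (p.1 q)) / 2 := by
    rw [empiricalMean, empiricalMean, ← mul_sub, ← Finset.sum_sub_distrib,
      Finset.sum_congr rfl fun q _ => hterm q, Finset.sum_sub_distrib]
    ring
  rw [hgap]
  linarith [(le_abs_self _).trans (le_rademacherSup hg ε p.2 i),
    (neg_le_abs _).trans (le_rademacherSup hg ε p.1 i)]

variable [MeasurableSpace Z] {μ : Measure Z} [IsProbabilityMeasure μ]

lemma supDeviation_le_integral_supGap [Nonempty ι] [Countable ι] (hn : 0 < n)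
    (hgm : ∀ i, Measurable (g i)) (hg : ∀ i x, g i x ∈ Set.Icc (0 : ℝ) 1) (z : Fin n → Z) :
    supDeviation μ g z ≤ ∫ z', supGap g z z' ∂(Measure.pi fun _ => μ) := by
  refine ciSup_le fun i => ?_
  have hmean_int : Integrable (empiricalMean (g i)) (Measure.pi fun _ : Fin n => μ) :=
    .of_mem_Icc 0 1 (measurable_empiricalMean (hgm i)).aemeasurable
      (.of_forall (empiricalMean_mem_Icc (hg i)))
  calc ∫ x, g i x ∂μ - empiricalMean (g i) z
      = ∫ z', (empiricalMean (g i) z' - empiricalMean (g i) z) ∂(Measure.pi fun _ => μ) := by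
        rw [integral_sub hmean_int (integrable_const _), integral_const, integral_empiricalMean μ hn
          (hgm i) (.of_mem_Icc 0 1 (hgm i).aemeasurable (.of_forall (hg i)))]
        simp
    _ ≤ ∫ z', supGap g z z' ∂(Measure.pi fun _ => μ) :=
        integral_mono (hmean_int.sub (integrable_const _))
          ((measurable_supGap hgm).comp measurable_prodMk_left |>.integrable_of_abs_le
            fun z' => abs_supGap_le hg z z')
          fun z' => le_supGap hg i z z'

theorem integral_supDeviation_le_integral_rademacherSup [Nonempty ι] [Countable ι] (hn : 0 < n)
    (hgm : ∀ i, Measurable (g i)) (hg : ∀ i x, g i x ∈ Set.Icc (0 : ℝ) 1) (ε : Fin n → Bool) :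
    ∫ z : Fin n → Z, supDeviation μ g z ∂(Measure.pi fun _ => μ)
      ≤ ∫ z, rademacherSup g ε z ∂(Measure.pi fun _ => μ) := by
  set ν := Measure.pi fun _ : Fin n => μ
  have hswap := measurePreserving_swapWhere μ ε
  have hgap := measurable_supGap (n := n) hgm
  have hgap_int : Integrable (fun p => supGap g p.1 p.2) (ν.prod ν) :=
    hgap.integrable_of_abs_le fun p => abs_supGap_le hg p.1 p.2
  have hrad := measurable_rademacherSup hgm ε
  have hrad_int : Integrable (rademacherSup g ε) ν :=
    hrad.integrable_of_abs_le (abs_rademacherSup_le hg ε)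
  have hrad_snd : Integrable (fun p : (Fin n → Z) × (Fin n → Z) => rademacherSup g ε p.2)
      (ν.prod ν) := measurePreserving_snd.integrable_comp_of_integrable hrad_int
  have hrad_fst : Integrable (fun p : (Fin n → Z) × (Fin n → Z) => rademacherSup g ε p.1)
      (ν.prod ν) := measurePreserving_fst.integrable_comp_of_integrable hrad_int
  calc ∫ z, supDeviation μ g z ∂ν ≤ ∫ z, ∫ z', supGap g z z' ∂ν ∂ν :=
        integral_mono
          ((measurable_supDeviation hgm).integrable_of_abs_le (abs_supDeviation_le hg))
          hgap_int.integral_prod_left (supDeviation_le_integral_supGap hn hgm hg)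
    _ = ∫ p, supGap g p.1 p.2 ∂(ν.prod ν) := (integral_prod _ hgap_int).symm
    _ = ∫ p, supGap g (swapWhere ε p).1 (swapWhere ε p).2 ∂(ν.prod ν) :=
        (hswap.integral_comp_of_measurable hgap).symm
    _ ≤ ∫ p, (rademacherSup g ε p.2 + rademacherSup g ε p.1) / 2 ∂(ν.prod ν) :=
        integral_mono
          ((hgap.comp hswap.measurable).integrable_of_abs_le fun p => abs_supGap_le hg _ _)
          ((hrad_snd.add hrad_fst).div_const 2) (supGap_swapWhere_le hg ε)
    _ = ∫ z, rademacherSup g ε z ∂ν := by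
        rw [integral_div, integral_add hrad_snd hrad_fst,
          measurePreserving_snd.integral_comp_of_measurable hrad,
          measurePreserving_fst.integral_comp_of_measurable hrad]
        ring

theorem integral_supDeviation_le_rademacherComplexity [Nonempty ι] [Countable ι] (hn : 0 < n)
    (hgm : ∀ i, Measurable (g i)) (hg : ∀ i x, g i x ∈ Set.Icc (0 : ℝ) 1) :
    ∫ z : Fin n → Z, supDeviation μ g z ∂(Measure.pi fun _ => μ)
      ≤ rademacherComplexity μ g n := by
  rw [rademacherComplexity, integral_div, integral_finsetSum _ fun ε _ =>
    (measurable_rademacherSup hgm ε).integrable_of_abs_le (abs_rademacherSup_le hg ε),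
    le_div_iff₀ (by positivity)]
  calc (∫ z : Fin n → Z, supDeviation μ g z ∂(Measure.pi fun _ => μ)) * 2 ^ n
      = ∑ _ε : Fin n → Bool, ∫ z, supDeviation μ g z ∂(Measure.pi fun _ => μ) := by
        simp [mul_comm]
    _ ≤ _ := Finset.sum_le_sum fun ε _ =>
        integral_supDeviation_le_integral_rademacherSup hn hgm hg ε

end Symmetrization

lemma exp_neg_four_mul_log_two_div_le {δ : ℝ} (hδ0 : 0 < δ) (hδ1 : δ ≤ 1) :
    exp (-(4 * log (2 / δ))) ≤ δ := by
  rw [show -(4 * log (2 / δ)) = (4 : ℕ) * log (δ / 2) by rw [← inv_div, log_inv]; push_cast; ring,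
    ← log_pow, exp_log (by positivity)]
  calc (δ / 2) ^ 4 ≤ δ / 2 := pow_le_of_le_one (by positivity) (by linarith) (by norm_num)
    _ ≤ δ := by linarith

/-- (Uniform generalization bound via Rademacher complexity.) For a
probability measure `μ` on `Z`, a nonempty countable family `G` of measurable functions
`Z → [0,1]`, and `R` the Rademacher complexity of `G` on `Q` i.i.d. samples, for every
`δ ∈ (0,1)`, with probability at least `1 − δ` over `z ∼ μ^{⊗Q}`, every `g ∈ G` satisfies
`E_μ[g] ≤ (1/Q) Σ_q g(z_q) + R + √(8 ln(2/δ)/Q)`. -/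
theorem rademacher_generalization_bound
    {Z : Type*} [MeasurableSpace Z] (μ : Measure Z) [IsProbabilityMeasure μ]
    {Q : ℕ} (hQ : 0 < Q)
    (G : Set (Z → ℝ)) (hGc : G.Countable) (hGne : G.Nonempty)
    (hmeas : ∀ g ∈ G, Measurable g)
    (hrange : ∀ g ∈ G, ∀ z : Z, g z ∈ Set.Icc (0 : ℝ) 1)
    (R : ℝ)
    (hR : R = ∫ z : Fin Q → Z,
        ((∑ ε : Fin Q → Bool,
            ⨆ g : G, |(2 / (Q : ℝ)) * ∑ q, radSign (ε q) * g.1 (z q)|) / 2 ^ Q)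
        ∂(Measure.pi fun _ : Fin Q => μ)) :
    ∀ δ ∈ Set.Ioo (0 : ℝ) 1,
      ENNReal.ofReal (1 - δ) ≤
        (Measure.pi fun _ : Fin Q => μ)
          {z : Fin Q → Z | ∀ g ∈ G,
            ∫ ζ, g ζ ∂μ ≤ (1 / (Q : ℝ)) * ∑ q, g (z q) + R
              + Real.sqrt (8 * Real.log (2 / δ) / Q)} := by
  rintro δ ⟨hδ0, hδ1⟩
  have : Countable G := hGc.to_subtype
  have : Nonempty G := hGne.to_subtype
  have hgm : ∀ g : G, Measurable g.1 := fun g => hmeas g g.2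
  have hg : ∀ (g : G) x, g.1 x ∈ Set.Icc (0 : ℝ) 1 := fun g => hrange g g.2
  set ν := Measure.pi fun _ : Fin Q => μ
  set D := supDeviation (n := Q) μ fun g : G => g.1
  set t := sqrt (8 * log (2 / δ) / Q)
  have hDR : ∫ z, D z ∂ν ≤ R := hR ▸ integral_supDeviation_le_rademacherComplexity hQ hgm hg
  have htail : ν.real {z | ∫ z', D z' ∂ν + t ≤ D z} ≤ δ := by
    refine (measureReal_integral_add_le_le_of_bounded_differences μ (c := (Q : ℝ≥0)⁻¹)
      (measurable_supDeviation hgm)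
      (fun z q x => by simpa using abs_supDeviation_update_sub_le hg z q x) (sqrt_nonneg _)).trans
      (le_of_eq_of_le ?_ (exp_neg_four_mul_log_two_div_le hδ0 hδ1.le))
    have hlog : 0 ≤ log (2 / δ) := log_nonneg (by rw [le_div_iff₀ hδ0]; linarith)
    rw [sq_sqrt (by positivity)]
    congr 1
    push_cast
    field_simp
    ring
  refine (Measure.ofReal_one_sub_le_measure_compl
    (measurableSet_le measurable_const (measurable_supDeviation hgm)) htail).trans
    (measure_mono fun z hz g hgG => ?_)
  have := le_supDeviation (μ := μ) hg ⟨g, hgG⟩ z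
  simp only [Set.mem_compl_iff, Set.mem_ofPred_eq, not_le] at hz
  dsimp only [empiricalMean] at this
  linarith
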